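/- arXiv:1911.00319 — 2 statements merged into one kernel-verified Lean document; each statement's English description precedes it below -/
import Mathlib

section
/- Theorem 1, case O⁺₁,<: Assume there exist a > 0, τ > 0 and a continuously differentiable function b : [0,a] → ℝ with b(0) = 0 and b'(x) ≤ −τ for all x ∈ [0,a], such that (x, b(x)) ∈ Ĝ for every x ∈ (0,a], and there exists c ∈ (0,a] such that every point (x,y) with 0 < x ≤ c and b(x) < y ≤ c belongs to G. Then there exist h ∈ (0,c] and a function φ : [0,h] → ℝ with φ(0) = 0 which is a solution of y' = f₀(x,y) with graph in G̃ on [0,h]. -/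
/-!
Since `b' ≤ -τ` and `b 0 = 0`, the curve satisfies `b x ≤ -τ x`. Hence for `ε < min τ 1` and small
`h` the wedge `0 ≤ x ≤ h, |y| ≤ ε x` lies in `G ∪ Ĝ` (its vertex is the origin, the rest lies above
the curve), and continuity of `f₀` at the origin makes `|f₀| ≤ ε` there. Extend `f₀` from the
wedge to a continuous function bounded by `ε` (Tietze). Peano's theorem yields a solution with
`φ 0 = 0` for the extension; as `|φ'| ≤ ε`, its graph stays in the wedge, where the extension is
`f₀`. Peano's theorem is proved by approximating the field uniformly by Lipschitz functions,
solving with Picard–Lindelöf, and extracting a convergent subsequence by Arzelà–Ascoli.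
-/

open Set Filter Topology Metric
open scoped NNReal

section LipschitzEnvelope

variable {X : Type*} [PseudoMetricSpace X] {F : X → ℝ} {k m M : ℝ}

/-- The Pasch–Hausdorff envelope: for `k ≥ 0` and `F` bounded below, the largest `k`-Lipschitz
function below `F`. -/
noncomputable def lipschitzEnvelope (F : X → ℝ) (k : ℝ) (x : X) : ℝ :=
  ⨅ y, F y + k * dist x y

lemma bddBelow_range_add_mul_dist (hF : ∀ y, m ≤ F y) (hk : 0 ≤ k) (x : X) :
    BddBelow (range fun y => F y + k * dist x y) :=
  ⟨m, by rintro _ ⟨y, rfl⟩; nlinarith [hF y, dist_nonneg (x := x) (y := y)]⟩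

lemma lipschitzEnvelope_le (hF : ∀ y, m ≤ F y) (hk : 0 ≤ k) (x : X) :
    lipschitzEnvelope F k x ≤ F x := by
  simpa [lipschitzEnvelope] using ciInf_le (bddBelow_range_add_mul_dist hF hk x) x

lemma le_lipschitzEnvelope (hF : ∀ y, m ≤ F y) (hk : 0 ≤ k) (x : X) :
    m ≤ lipschitzEnvelope F k x :=
  have : Nonempty X := ⟨x⟩
  le_ciInf fun y => by nlinarith [hF y, dist_nonneg (x := x) (y := y)]

lemma abs_lipschitzEnvelope_le (hF : ∀ y, |F y| ≤ M) (hk : 0 ≤ k) (x : X) :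
    |lipschitzEnvelope F k x| ≤ M := by
  have hF' : ∀ y, -M ≤ F y := fun y => (abs_le.1 (hF y)).1
  exact abs_le.2 ⟨le_lipschitzEnvelope hF' hk x,
    (lipschitzEnvelope_le hF' hk x).trans (abs_le.1 (hF x)).2⟩

lemma lipschitzWith_lipschitzEnvelope (hF : ∀ y, m ≤ F y) (k : ℝ≥0) :
    LipschitzWith k (lipschitzEnvelope F k) := by
  refine LipschitzWith.of_le_add_mul k fun x x' => ?_
  have : Nonempty X := ⟨x⟩
  rw [← sub_le_iff_le_add]
  refine le_ciInf fun y => ?_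
  have hle : lipschitzEnvelope F k x ≤ F y + k * dist x y :=
    ciInf_le (bddBelow_range_add_mul_dist hF k.coe_nonneg x) y
  have htri : dist x y ≤ dist x x' + dist x' y := dist_triangle _ _ _
  have := mul_le_mul_of_nonneg_left htri k.coe_nonneg
  rw [mul_add] at this
  linarith

lemma tendstoUniformly_lipschitzEnvelope (hF : UniformContinuous F) (hM : ∀ x, |F x| ≤ M) :
    TendstoUniformly (fun n : ℕ => lipschitzEnvelope F n) F atTop := by
  have hF' : ∀ y, -M ≤ F y := fun y => (abs_le.1 (hM y)).1
  rw [Metric.tendstoUniformly_iff]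
  intro σ hσ
  obtain ⟨δ, hδ, hFδ⟩ := Metric.uniformContinuous_iff.1 hF (σ / 2) (half_pos hσ)
  filter_upwards [tendsto_natCast_atTop_atTop.eventually_ge_atTop (2 * M / δ)] with n hn x
  have : Nonempty X := ⟨x⟩
  have hk : (0 : ℝ) ≤ n := n.cast_nonneg
  -- far from `x` the penalty `n * dist x y` exceeds the oscillation `2 * M` of `F`
  have hlow : F x - σ / 2 ≤ lipschitzEnvelope F n x := by
    refine le_ciInf fun y => ?_
    rcases lt_or_ge (dist x y) δ with hxy | hxy
    · have := (abs_lt.1 (hFδ hxy)).2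
      nlinarith [dist_nonneg (x := x) (y := y)]
    · have h2M : 2 * M ≤ n * dist x y :=
        calc 2 * M = 2 * M / δ * δ := by field_simp
          _ ≤ n * dist x y := mul_le_mul hn hxy hδ.le hk
      linarith [(abs_le.1 (hM x)).2, hF' y]
  rw [Real.dist_eq, abs_of_nonneg (sub_nonneg.2 (lipschitzEnvelope_le hF' hk x))]
  linarith

end LipschitzEnvelope

lemma exists_continuous_subseq_tendsto_of_lipschitzOnWith {u : ℕ → ℝ → ℝ} {a b C : ℝ}
    {K : ℝ≥0} (hab : a ≤ b) (hu : ∀ n, LipschitzOnWith K (u n) (Icc a b))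
    (hC : ∀ n, ∀ x ∈ Icc a b, |u n x| ≤ C) :
    ∃ φ : ℝ → ℝ, Continuous φ ∧ ∃ σ : ℕ → ℕ, StrictMono σ ∧
      ∀ x ∈ Icc a b, Tendsto (fun n => u (σ n) x) atTop (𝓝 (φ x)) := by
  let v : ℕ → BoundedContinuousFunction (Icc a b) ℝ := fun n =>
    .mkOfCompact ⟨(Icc a b).domRestrict (u n), (hu n).continuousOn.domRestrict⟩
  have hequi : Equicontinuous fun f : range v => ⇑(f : BoundedContinuousFunction (Icc a b) ℝ) := by
    refine (LipschitzWith.uniformEquicontinuous _ K ?_).equicontinuous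
    rintro ⟨_, n, rfl⟩
    exact (hu n).to_restrict
  have hcpt := BoundedContinuousFunction.arzela_ascoli (Icc (-C) C) isCompact_Icc (range v)
    (by rintro _ x ⟨n, rfl⟩; exact abs_le.1 (hC n x x.2)) hequi
  obtain ⟨g, -, σ, hσ, hlim⟩ := hcpt.tendsto_subseq fun n => subset_closure (mem_range_self n)
  refine ⟨IccExtend hab g, g.continuous.Icc_extend', σ, hσ, fun x hx => ?_⟩
  rw [IccExtend_of_mem hab g hx]
  exact ((continuous_eval_const (⟨x, hx⟩ : Icc a b)).tendsto g).comp hlim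

section Solutions

def IsSolutionIcc (F : ℝ × ℝ → ℝ) (y₀ h : ℝ) (φ : ℝ → ℝ) : Prop :=
  φ 0 = y₀ ∧ ∀ t ∈ Icc 0 h, HasDerivWithinAt φ (F (t, φ t)) (Icc 0 h) t

variable {F : ℝ × ℝ → ℝ} {φ : ℝ → ℝ} {y₀ h M : ℝ}

lemma IsSolutionIcc.continuousOn (hφ : IsSolutionIcc F y₀ h φ) : ContinuousOn φ (Icc 0 h) :=
  fun t ht => (hφ.2 t ht).continuousWithinAt

lemma IsSolutionIcc.lipschitzOnWith (hφ : IsSolutionIcc F y₀ h φ) (hM : ∀ p, |F p| ≤ M) :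
    LipschitzOnWith M.toNNReal φ (Icc 0 h) :=
  (convex_Icc 0 h).lipschitzOnWith_of_nnnorm_hasDerivWithin_le hφ.2 fun t _ => by
    rw [← NNReal.coe_le_coe, coe_nnnorm, Real.norm_eq_abs]
    exact (hM _).trans (M.le_coe_toNNReal)

lemma IsSolutionIcc.abs_sub_le (hφ : IsSolutionIcc F y₀ h φ) (hM : ∀ p, |F p| ≤ M) {t : ℝ}
    (ht : t ∈ Icc 0 h) : |φ t - y₀| ≤ M * t := by
  have := (convex_Icc 0 h).norm_image_sub_le_of_norm_hasDerivWithin_le hφ.2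
    (fun s _ => (Real.norm_eq_abs _).trans_le (hM _)) ⟨le_rfl, ht.1.trans ht.2⟩ ht
  simpa [Real.norm_eq_abs, hφ.1, abs_of_nonneg ht.1] using this

lemma IsSolutionIcc.eq_add_integral (hφ : IsSolutionIcc F y₀ h φ) (hF : Continuous F) {t : ℝ}
    (ht : t ∈ Icc 0 h) : φ t = y₀ + ∫ s in (0 : ℝ)..t, F (s, φ s) := by
  have hsub : Icc 0 t ⊆ Icc 0 h := Icc_subset_Icc_right ht.2
  have hcont : ContinuousOn (fun s => F (s, φ s)) (Icc 0 t) :=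
    hF.comp_continuousOn (continuousOn_id.prodMk (hφ.continuousOn.mono hsub))
  rw [intervalIntegral.integral_eq_sub_of_hasDeriv_right_of_le ht.1 (hφ.continuousOn.mono hsub)
    (fun s hs => ?_) (hcont.intervalIntegrable_of_Icc ht.1), hφ.1, add_sub_cancel]
  have hs' : s ∈ Ioo 0 h := ⟨hs.1, hs.2.trans_le ht.2⟩
  exact ((hφ.2 s (Ioo_subset_Icc_self hs')).hasDerivAt
    (Icc_mem_nhds hs'.1 hs'.2)).hasDerivWithinAt

lemma isSolutionIcc_of_eq_add_integral (hF : Continuous F) (hφ : Continuous φ) (hh : 0 ≤ h)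
    (heq : ∀ t ∈ Icc 0 h, φ t = y₀ + ∫ s in (0 : ℝ)..t, F (s, φ s)) :
    IsSolutionIcc F y₀ h φ := by
  have hcont : Continuous fun s => F (s, φ s) := hF.comp (continuous_id.prodMk hφ)
  refine ⟨by simpa using heq 0 ⟨le_rfl, hh⟩, fun t ht => ?_⟩
  have hint : HasDerivAt (fun t => y₀ + ∫ s in (0 : ℝ)..t, F (s, φ s)) (F (t, φ t)) t :=
    (intervalIntegral.integral_hasDerivAt_right (hcont.intervalIntegrable _ _)
      (hcont.stronglyMeasurableAtFilter _ _) hcont.continuousAt).const_add y₀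
  exact hint.hasDerivWithinAt.congr heq (heq t ht)

lemma exists_isSolutionIcc_of_lipschitzWith {K : ℝ≥0} (hF : LipschitzWith K F)
    (hM : ∀ p, |F p| ≤ M) (hh : 0 ≤ h) (y₀ : ℝ) : ∃ φ, IsSolutionIcc F y₀ h φ := by
  have hM0 : 0 ≤ M := (abs_nonneg _).trans (hM 0)
  have hPL : IsPicardLindelof (fun t y => F (t, y)) (tmin := 0) (tmax := h)
      ⟨0, le_rfl, hh⟩ y₀ ⟨M * h, mul_nonneg hM0 hh⟩ 0 ⟨M, hM0⟩ K := by
    refine ⟨fun t _ => ?_, fun y _ => ?_, fun t _ y _ => ?_, ?_⟩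
    · simpa [Function.comp_def] using (hF.comp (LipschitzWith.prodMk_left t)).lipschitzOnWith
    · exact (hF.continuous.comp (continuous_id.prodMk continuous_const)).continuousOn
    · exact (Real.norm_eq_abs _).trans_le (hM _)
    · simp only [NNReal.coe_zero, sub_zero, max_eq_left hh]
      exact le_rfl
  exact IsPicardLindelof.exists_eq_forall_mem_Icc_hasDerivWithinAt₀ hPL

lemma TendstoUniformly.isSolutionIcc {ι : Type*} {l : Filter ι} [l.IsCountablyGenerated] [l.NeBot]
    {A : ι → ℝ × ℝ → ℝ} {u : ι → ℝ → ℝ} (hA : TendstoUniformly A F l) (hF : Continuous F)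
    (hAc : ∀ i, Continuous (A i)) (hAM : ∀ i p, |A i p| ≤ M)
    (hu : ∀ i, IsSolutionIcc (A i) y₀ h (u i)) (hφ : Continuous φ) (hh : 0 ≤ h)
    (hlim : ∀ t ∈ Icc 0 h, Tendsto (fun i => u i t) l (𝓝 (φ t))) :
    IsSolutionIcc F y₀ h φ := by
  refine isSolutionIcc_of_eq_add_integral hF hφ hh fun t ht => tendsto_nhds_unique (hlim t ht) ?_
  have hsub : uIoc 0 t ⊆ Icc 0 h := by
    rw [uIoc_of_le ht.1]; exact Ioc_subset_Icc_self.trans (Icc_subset_Icc_right ht.2)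
  simp_rw [fun i => (hu i).eq_add_integral (hAc i) ht]
  refine tendsto_const_nhds.add
    (intervalIntegral.tendsto_integral_filter_of_dominated_convergence (fun _ => M) ?_ ?_
      intervalIntegrable_const ?_)
  · refine Eventually.of_forall fun i => ContinuousOn.aestronglyMeasurable ?_ measurableSet_uIoc
    exact (hAc i).comp_continuousOn (continuousOn_id.prodMk ((hu i).continuousOn.mono hsub))
  · exact Eventually.of_forall fun i => MeasureTheory.ae_of_all _ fun s _ => hAM i _
  · refine MeasureTheory.ae_of_all _ fun s hs => ?_
    exact hA.tendsto_comp hF.continuousAt (tendsto_const_nhds.prodMk_nhds (hlim s (hsub hs)))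

end Solutions

section Peano

variable {F : ℝ × ℝ → ℝ} {h M : ℝ}

/-- The solutions of the Lipschitz approximations `lipschitzEnvelope F n` are uniformly
Lipschitz, so Arzelà–Ascoli extracts a subsequence converging to a solution for `F`. -/
theorem exists_isSolutionIcc_of_uniformContinuous (hF : UniformContinuous F)
    (hM : ∀ p, |F p| ≤ M) (hh : 0 ≤ h) (y₀ : ℝ) : ∃ φ, IsSolutionIcc F y₀ h φ := by
  set A : ℕ → ℝ × ℝ → ℝ := fun n => lipschitzEnvelope F n
  have hF' : ∀ p, -M ≤ F p := fun p => (abs_le.1 (hM p)).1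
  have hAM : ∀ n p, |A n p| ≤ M := fun n => abs_lipschitzEnvelope_le hM n.cast_nonneg
  have hAlip : ∀ n : ℕ, LipschitzWith n (A n) := fun n =>
    mod_cast lipschitzWith_lipschitzEnvelope hF' (n : ℝ≥0)
  choose u hu using fun n => exists_isSolutionIcc_of_lipschitzWith (hAlip n) (hAM n) hh y₀
  have hbdd : ∀ n, ∀ t ∈ Icc 0 h, |u n t| ≤ |y₀| + M * h := fun n t ht =>
    calc |u n t| ≤ |u n t - y₀| + |y₀| := by simpa using abs_add_le (u n t - y₀) y₀
      _ ≤ M * t + |y₀| := by gcongr; exact (hu n).abs_sub_le (hAM n) ht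
      _ ≤ |y₀| + M * h := by nlinarith [ht.2, (abs_nonneg _).trans (hM 0)]
  obtain ⟨φ, hφ, σ, hσ, hlim⟩ := exists_continuous_subseq_tendsto_of_lipschitzOnWith hh
    (fun n => (hu n).lipschitzOnWith (hAM n)) hbdd
  have hAσ : TendstoUniformly (fun n => A (σ n)) F atTop := fun s hs =>
    hσ.tendsto_atTop.eventually (tendstoUniformly_lipschitzEnvelope hF hM s hs)
  exact ⟨φ, hAσ.isSolutionIcc hF.continuous (fun n => (hAlip (σ n)).continuous)
    (fun n => hAM (σ n)) (fun n => hu (σ n)) hφ hh hlim⟩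

theorem exists_isSolutionIcc_of_continuous (hF : Continuous F) (hM : ∀ p, |F p| ≤ M)
    (hh : 0 ≤ h) (y₀ : ℝ) : ∃ φ, IsSolutionIcc F y₀ h φ := by
  have hM0 : 0 ≤ M := (abs_nonneg _).trans (hM 0)
  have hr : y₀ - M * h ≤ y₀ + M * h := by nlinarith
  -- a solution never leaves the box `[0, h] × [y₀ - M h, y₀ + M h]`, so `F` may be frozen
  -- outside of it, which makes it uniformly continuous
  let P : ℝ × ℝ → Icc 0 h × Icc (y₀ - M * h) (y₀ + M * h) :=
    Prod.map (projIcc 0 h hh) (projIcc _ _ hr)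
  let G : ℝ × ℝ → ℝ := (fun q => F (q.1, q.2)) ∘ P
  have hG : UniformContinuous G :=
    (CompactSpace.uniformContinuous_of_continuous (by fun_prop)).comp
      ((LipschitzWith.projIcc hh).uniformContinuous.prodMap
        (LipschitzWith.projIcc hr).uniformContinuous)
  obtain ⟨φ, hφ⟩ := exists_isSolutionIcc_of_uniformContinuous hG (fun p => hM _) hh y₀
  have hGF : ∀ t ∈ Icc 0 h, G (t, φ t) = F (t, φ t) := by
    intro t ht
    have := abs_le.1 ((hφ.abs_sub_le (fun p => hM _) ht).trans
      (mul_le_mul_of_nonneg_left ht.2 hM0))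
    simp [G, P, projIcc_of_mem hh ht,
      projIcc_of_mem hr ⟨by linarith [this.1], by linarith [this.2]⟩]
  exact ⟨φ, hφ.1, fun t ht => hGF t ht ▸ hφ.2 t ht⟩

end Peano

lemma ContinuousOn.exists_continuous_extension_abs_le {X : Type*} [TopologicalSpace X]
    [NormalSpace X] {s : Set X} {f : X → ℝ} {M : ℝ} (hf : ContinuousOn f s) (hs : IsClosed s)
    (hfM : ∀ x ∈ s, |f x| ≤ M) (hM : 0 ≤ M) :
    ∃ F : X → ℝ, Continuous F ∧ (∀ x, |F x| ≤ M) ∧ EqOn F f s := by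
  obtain ⟨g, hg, hgf⟩ := ContinuousMap.exists_restrict_eq_forall_mem_of_closed
    ⟨s.domRestrict f, hf.domRestrict⟩ (t := Icc (-M) M) (fun x => abs_le.1 (hfM x x.2))
    ⟨0, neg_nonpos.2 hM, hM⟩ hs
  exact ⟨g, g.continuous, fun x => abs_le.2 (hg x), fun x hx => congr($hgf ⟨x, hx⟩)⟩

lemma le_neg_mul_of_hasDerivWithinAt {a τ : ℝ} {b b' : ℝ → ℝ}
    (hderiv : ∀ x ∈ Icc 0 a, HasDerivWithinAt b (b' x) (Icc 0 a) x) (hb0 : b 0 = 0)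
    (hb' : ∀ x ∈ Icc 0 a, b' x ≤ -τ) {x : ℝ} (hx : x ∈ Icc 0 a) : b x ≤ -τ * x := by
  have hanti : AntitoneOn (fun x => b x + τ * x) (Icc 0 a) := by
    refine antitoneOn_of_hasDerivWithinAt_nonpos (convex_Icc 0 a)
      (fun y hy => ((hderiv y hy).continuousWithinAt).add (by fun_prop))
      (fun y hy => ((hderiv y (interior_subset hy)).mono interior_subset).add
        ((hasDerivWithinAt_id y _).const_mul τ)) (fun y hy => ?_)
    linarith [hb' y (interior_subset hy)]
  have := hanti ⟨le_rfl, hx.1.trans hx.2⟩ hx hx.1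
  simp only [hb0, mul_zero, add_zero] at this
  linarith

def wedge (ε h : ℝ) : Set (ℝ × ℝ) := {p | p.1 ∈ Icc 0 h ∧ |p.2| ≤ ε * p.1}

lemma isClosed_wedge (ε h : ℝ) : IsClosed (wedge ε h) :=
  (isClosed_Icc.preimage continuous_fst).inter
    (isClosed_le continuous_snd.abs (continuous_const.mul continuous_fst))

lemma wedge_subset_closedBall {ε h : ℝ} (hε : ε ≤ 1) : wedge ε h ⊆ closedBall 0 h := by
  rintro ⟨x, y⟩ ⟨⟨hx0, hxh⟩, hy⟩
  rw [mem_closedBall_zero_iff, Prod.norm_def, Real.norm_eq_abs, Real.norm_eq_abs,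
    abs_of_nonneg hx0]
  exact max_le hxh (by nlinarith)

lemma wedge_subset {S : Set (ℝ × ℝ)} {b : ℝ → ℝ} {c τ ε h : ℝ} (hO : ((0 : ℝ), (0 : ℝ)) ∈ S)
    (hin : ∀ x y : ℝ, 0 < x → x ≤ c → b x < y → y ≤ c → (x, y) ∈ S)
    (hb : ∀ x ∈ Ioc 0 c, b x ≤ -τ * x) (hετ : ε < τ) (hε : ε ≤ 1) (hhc : h ≤ c) :
    wedge ε h ⊆ S := by
  rintro ⟨x, y⟩ ⟨⟨hx0, hxh⟩, hy⟩
  rcases hx0.eq_or_lt with rfl | hx0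
  · obtain rfl : y = 0 := by simpa using hy
    exact hO
  · have hxc : x ≤ c := hxh.trans hhc
    have hy' := abs_le.1 hy
    refine hin x y hx0 hxc ?_ ?_
    · nlinarith [hb x ⟨hx0, hxc⟩]
    · nlinarith

theorem theorem1_case_O1_lt_general
    (G Ghat : Set (ℝ × ℝ))
    (f₀ : ℝ × ℝ → ℝ) (hf : ContinuousOn f₀ (G ∪ Ghat))
    (hO : ((0 : ℝ), (0 : ℝ)) ∈ Ghat) (hf0 : f₀ (0, 0) = 0)
    (a τ : ℝ) (hτ : 0 < τ)
    (b b' : ℝ → ℝ)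
    (hderiv : ∀ x ∈ Icc (0 : ℝ) a, HasDerivWithinAt b (b' x) (Icc (0 : ℝ) a) x)
    (hb0 : b 0 = 0)
    (hb'τ : ∀ x ∈ Icc (0 : ℝ) a, b' x ≤ -τ)
    (c : ℝ) (hc : c ∈ Ioc (0 : ℝ) a)
    (hin : ∀ x y : ℝ, 0 < x → x ≤ c → b x < y → y ≤ c → (x, y) ∈ G) :
    ∃ h ∈ Ioc (0 : ℝ) c, ∃ φ : ℝ → ℝ, φ 0 = 0 ∧
      ∀ x ∈ Icc (0 : ℝ) h, (x, φ x) ∈ G ∪ Ghat ∧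
        HasDerivWithinAt φ (f₀ (x, φ x)) (Icc (0 : ℝ) h) x := by
  obtain ⟨hc0, hca⟩ := hc
  set ε := min 1 (τ / 2)
  have hε : 0 < ε := lt_min one_pos (half_pos hτ)
  have hετ : ε < τ := (min_le_right _ _).trans_lt (half_lt_self hτ)
  obtain ⟨δ, hδ, hf₀δ⟩ := Metric.continuousWithinAt_iff.1 (hf _ (Or.inr hO)) ε hε
  set h := min c (δ / 2)
  have hh : 0 < h := lt_min hc0 (half_pos hδ)
  have hWG : wedge ε h ⊆ G ∪ Ghat :=
    wedge_subset (Or.inr hO) (fun x y h₁ h₂ h₃ h₄ => Or.inl (hin x y h₁ h₂ h₃ h₄))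
      (fun x hx => le_neg_mul_of_hasDerivWithinAt hderiv hb0 hb'τ ⟨hx.1.le, hx.2.trans hca⟩)
      hετ (min_le_left _ _) (min_le_left _ _)
  have hWf : ∀ p ∈ wedge ε h, |f₀ p| ≤ ε := fun p hp => by
    have hpδ : dist p (0, 0) < δ :=
      (wedge_subset_closedBall (min_le_left _ _) hp).trans_lt ((min_le_right _ _).trans_lt
        (half_lt_self hδ))
    simpa [hf0, Real.dist_eq] using (hf₀δ (hWG hp) hpδ).le
  obtain ⟨F, hF, hFε, hFf⟩ :=
    (hf.mono hWG).exists_continuous_extension_abs_le (isClosed_wedge ε h) hWf hε.le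
  obtain ⟨φ, hφ⟩ := exists_isSolutionIcc_of_continuous hF hFε hh.le 0
  have hφW : ∀ x ∈ Icc 0 h, (x, φ x) ∈ wedge ε h := fun x hx =>
    ⟨hx, by simpa using hφ.abs_sub_le hFε hx⟩
  refine ⟨h, ⟨hh, min_le_left _ _⟩, φ, hφ.1, fun x hx => ⟨hWG (hφW x hx), ?_⟩⟩
  rw [← hFf (hφW x hx)]
  exact hφ.2 x hx

/-- Theorem 1, case O⁺₁,<. -/
theorem theorem1_case_O1_lt
    (G Ghat : Set (ℝ × ℝ)) (hGopen : IsOpen G) (hGhat : Ghat ⊆ frontier G)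
    (f₀ : ℝ × ℝ → ℝ) (hf : ContinuousOn f₀ (G ∪ Ghat))
    (hO : ((0 : ℝ), (0 : ℝ)) ∈ Ghat) (hf0 : f₀ (0, 0) = 0)
    (a τ : ℝ) (ha : 0 < a) (hτ : 0 < τ)
    (b b' : ℝ → ℝ)
    (hderiv : ∀ x ∈ Icc (0 : ℝ) a, HasDerivWithinAt b (b' x) (Icc (0 : ℝ) a) x)
    (hb'cont : ContinuousOn b' (Icc (0 : ℝ) a))
    (hb0 : b 0 = 0)
    (hb'τ : ∀ x ∈ Icc (0 : ℝ) a, b' x ≤ -τ)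
    (hcurve : ∀ x ∈ Ioc (0 : ℝ) a, (x, b x) ∈ Ghat)
    (c : ℝ) (hc : c ∈ Ioc (0 : ℝ) a)
    (hin : ∀ x y : ℝ, 0 < x → x ≤ c → b x < y → y ≤ c → (x, y) ∈ G) :
    ∃ h ∈ Ioc (0 : ℝ) c, ∃ φ : ℝ → ℝ, φ 0 = 0 ∧
      ∀ x ∈ Icc (0 : ℝ) h, (x, φ x) ∈ G ∪ Ghat ∧
        HasDerivWithinAt φ (f₀ (x, φ x)) (Icc (0 : ℝ) h) x :=
  theorem1_case_O1_lt_general G Ghat f₀ hf hO hf0 a τ hτ b b' hderiv hb0 hb'τ c hc hin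
end

section
/- Theorem 1, case B⁺₁,>,₌: Assume there exist a > 0, τ > 0 and continuously differentiable functions bᵤ, bₗ : [0,a] → ℝ with bᵤ(0) = bₗ(0) = 0, bᵤ'(x) ≥ τ for all x ∈ [0,a], bₗ'(0) = 0 and bₗ concave on [0,a], such that (x, bᵤ(x)) ∈ Ĝ and (x, bₗ(x)) ∈ Ĝ for every x ∈ (0,a], the boundary condition (5⁺ₗ) holds: f₀(x, bₗ(x)) ≥ bₗ'(x) for all x ∈ (0,a], and there exists c ∈ (0,a] such that every point (x,y) with 0 < x ≤ c and bₗ(x) < y < bᵤ(x) belongs to G. Then there exist h ∈ (0,c] and a function φ : [0,h] → ℝ with φ(0) = 0 which is a solution of y' = f₀(x,y) with graph in G̃ on [0,h]. -/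
/-!
Near the origin the band between `bl` and `bu` lies in `G ∪ Ĝ` and `|f₀| ≤ τ` on it, and
`bl ≤ bu` just right of `0` because `bl'(0) = 0 < τ ≤ bu'(0)`. Extend `f₀` from the band to the
plane by composing with the retraction onto the band and solve the extended equation by Peano's
theorem. The lower curve is a barrier because below it the extended field is `f₀(x, bl x) ≥ bl' x`,
the upper one because `f₀ ≤ τ ≤ bu'`; so the solution stays in the band, where the extended field
is `f₀` itself.

Peano's theorem is obtained by approximating the field `g` from below by the inf-convolutions
`inf_z (g (x, z) + k |y - z|)`, which are `k`-Lipschitz in `y` and converge to `g` uniformly. Their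
Picard–Lindelöf solutions increase with `k` by a comparison argument, and the monotone limit solves
the integral equation by dominated convergence.
-/

open Set Filter Topology

theorem le_of_hasDerivWithinAt_of_sub_le_mul {u v u' v' : ℝ → ℝ} {a b L : ℝ}
    (hu : ∀ x ∈ Icc a b, HasDerivWithinAt u (u' x) (Icc a b) x)
    (hv : ∀ x ∈ Icc a b, HasDerivWithinAt v (v' x) (Icc a b) x) (ha : u a ≤ v a)
    (hbound : ∀ x ∈ Ioo a b, v x < u x → u' x - v' x ≤ L * (u x - v x)) :
    ∀ x ∈ Icc a b, u x ≤ v x := by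
  intro x hx
  have hd : ∀ t ∈ Icc a b, HasDerivWithinAt (fun t => u t - v t) (u' t - v' t) (Icc a b) t :=
    fun t ht => (hu t ht).sub (hv t ht)
  set B : ℝ → ℝ → ℝ := fun ε t => ε * Real.exp ((L + 1) * (t - a))
  -- `u - v` cannot touch the barrier `B ε`, which grows faster than `L (u - v)` allows
  have hB : ∀ ε > 0, u x - v x ≤ B ε x := by
    intro ε hε
    have hB' : ∀ t, HasDerivAt (B ε) ((L + 1) * B ε t) t := fun t => by
      have := ((((hasDerivAt_id t).sub_const a).const_mul (L + 1)).exp).const_mul ε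
      simp only [id, mul_one] at this
      exact this.congr_deriv (by ring)
    have hBa : B ε a = ε := by simp only [B, sub_self, mul_zero, Real.exp_zero, mul_one]
    refine image_le_of_deriv_right_lt_deriv_boundary (fun t ht => (hd t ht).continuousWithinAt)
      (fun t ht => (hd t (Ico_subset_Icc_self ht)).mono_of_mem_nhdsWithin
        (Icc_mem_nhdsGE_of_mem ht)) (by rw [hBa]; linarith) hB' (fun t ht heq => ?_) hx
    have hBpos : 0 < B ε t := by positivity
    have hta : t ≠ a := by rintro rfl; rw [hBa] at heq; linarith
    have := hbound t ⟨lt_of_le_of_ne ht.1 hta.symm, ht.2⟩ (by linarith)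
    rw [heq] at this
    linarith
  have hlim : Tendsto (fun ε => B ε x) (𝓝[>] 0) (𝓝 0) :=
    ((continuous_mul_const _).tendsto' 0 0 (zero_mul _)).mono_left nhdsWithin_le_nhds
  exact sub_nonpos.1 (ge_of_tendsto hlim (eventually_nhdsWithin_of_forall hB))

noncomputable def infConvSnd (g : ℝ × ℝ → ℝ) (k : ℝ) (p : ℝ × ℝ) : ℝ :=
  ⨅ z : ℝ, g (p.1, z) + k * |p.2 - z|

section InfConvSnd

variable {g : ℝ × ℝ → ℝ} {k m : ℝ}

lemma bddBelow_infConvSnd (hm : ∀ p, m ≤ g p) (hk : 0 ≤ k) (p : ℝ × ℝ) :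
    BddBelow (range fun z => g (p.1, z) + k * |p.2 - z|) := by
  refine ⟨m, ?_⟩
  rintro _ ⟨z, rfl⟩
  linarith [hm (p.1, z), mul_nonneg hk (abs_nonneg (p.2 - z))]

lemma infConvSnd_le_add_mul (hm : ∀ p, m ≤ g p) (hk : 0 ≤ k) (p : ℝ × ℝ) (z : ℝ) :
    infConvSnd g k p ≤ g (p.1, z) + k * |p.2 - z| :=
  ciInf_le (bddBelow_infConvSnd hm hk p) z

lemma infConvSnd_le (hm : ∀ p, m ≤ g p) (hk : 0 ≤ k) (p : ℝ × ℝ) : infConvSnd g k p ≤ g p := by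
  simpa using infConvSnd_le_add_mul hm hk p p.2

lemma le_infConvSnd (hm : ∀ p, m ≤ g p) (hk : 0 ≤ k) (p : ℝ × ℝ) : m ≤ infConvSnd g k p :=
  le_ciInf fun z => by linarith [hm (p.1, z), mul_nonneg hk (abs_nonneg (p.2 - z))]

lemma infConvSnd_mono (hm : ∀ p, m ≤ g p) (hk : 0 ≤ k) {k' : ℝ} (hkk' : k ≤ k') (p : ℝ × ℝ) :
    infConvSnd g k p ≤ infConvSnd g k' p :=
  ciInf_mono (bddBelow_infConvSnd hm hk p) fun z => by gcongr

lemma infConvSnd_le_add (hm : ∀ p, m ≤ g p) (hk : 0 ≤ k) {x x' y y' e : ℝ}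
    (he : ∀ z, g (x, z) ≤ g (x', z) + e) :
    infConvSnd g k (x, y) ≤ infConvSnd g k (x', y') + e + k * |y - y'| := by
  suffices infConvSnd g k (x, y) - e - k * |y - y'| ≤ infConvSnd g k (x', y') by linarith
  refine le_ciInf fun z => ?_
  have hz := infConvSnd_le_add_mul hm hk (x, y) z
  have htri : k * |y - z| ≤ k * |y - y'| + k * |y' - z| := by
    rw [← mul_add]; exact mul_le_mul_of_nonneg_left (abs_sub_le y y' z) hk
  linarith [he z]

lemma lipschitzWith_infConvSnd (hm : ∀ p, m ≤ g p) (hk : 0 ≤ k) (x : ℝ) :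
    LipschitzWith ⟨k, hk⟩ fun y => infConvSnd g k (x, y) :=
  LipschitzWith.of_le_add_mul _ fun y y' => by
    have := infConvSnd_le_add hm hk (y := y) (y' := y') fun z => (add_zero (g (x, z))).ge
    rwa [add_zero, ← Real.dist_eq] at this

lemma uniformContinuous_infConvSnd (hg : UniformContinuous g) (hm : ∀ p, m ≤ g p) (hk : 0 ≤ k) :
    UniformContinuous (infConvSnd g k) := by
  rw [Metric.uniformContinuous_iff] at hg ⊢
  intro ε hε
  obtain ⟨ρ, hρ, hgρ⟩ := hg (ε / 2) (half_pos hε)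
  refine ⟨min ρ (ε / (2 * (k + 1))), by positivity, fun {p p'} hpp' => ?_⟩
  have hx : ∀ q q' : ℝ × ℝ, dist q q' < min ρ (ε / (2 * (k + 1))) →
      ∀ z, g (q.1, z) ≤ g (q'.1, z) + ε / 2 := fun q q' hqq' z => by
    rw [Prod.dist_eq] at hqq'
    have : dist (q.1, z) (q'.1, z) < ρ := by
      simpa [Prod.dist_eq] using ((le_max_left _ _).trans_lt hqq').trans_le (min_le_left _ _)
    have := hgρ this
    rw [Real.dist_eq, abs_lt] at this
    linarith
  have hy : k * |p.2 - p'.2| < ε / 2 := by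
    have hd : |p.2 - p'.2| < ε / (2 * (k + 1)) := by
      rw [Prod.dist_eq, Real.dist_eq (p.2)] at hpp'
      exact ((le_max_right _ _).trans_lt hpp').trans_le (min_le_right _ _)
    calc k * |p.2 - p'.2| ≤ (k + 1) * |p.2 - p'.2| := by gcongr; linarith
      _ < (k + 1) * (ε / (2 * (k + 1))) := by gcongr
      _ = ε / 2 := by field_simp
  have h₁ := infConvSnd_le_add hm hk (y := p.2) (y' := p'.2) (hx p p' hpp')
  have h₂ := infConvSnd_le_add hm hk (y := p'.2) (y' := p.2) (hx p' p (dist_comm p p' ▸ hpp'))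
  rw [abs_sub_comm] at h₂
  rw [Real.dist_eq, abs_sub_lt_iff]
  constructor <;> linarith

lemma tendstoUniformly_infConvSnd (hg : UniformContinuous g) {M : ℝ} (hM : ∀ p, |g p| ≤ M) :
    TendstoUniformly (infConvSnd g) g atTop := by
  have hm : ∀ p, -M ≤ g p := fun p => (abs_le.1 (hM p)).1
  rw [Metric.tendstoUniformly_iff]
  intro ε hε
  obtain ⟨ρ, hρ, hgρ⟩ := Metric.uniformContinuous_iff.1 hg (ε / 2) (half_pos hε)
  filter_upwards [eventually_ge_atTop (2 * M / ρ), eventually_ge_atTop 0] with k hkM hk p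
  -- far from `p.2` the penalty `k |p.2 - z|` exceeds the oscillation `2 M` of `g`
  have hlow : g p - ε / 2 ≤ infConvSnd g k p := le_ciInf fun z => by
    rcases lt_or_ge |p.2 - z| ρ with hz | hz
    · have : dist p (p.1, z) < ρ := by simpa [Prod.dist_eq, Real.dist_eq] using hz
      have := hgρ this
      rw [Real.dist_eq, abs_lt] at this
      linarith [mul_nonneg hk (abs_nonneg (p.2 - z))]
    · have h2M : 2 * M ≤ k * |p.2 - z| :=
        calc 2 * M = 2 * M / ρ * ρ := by field_simp
          _ ≤ k * |p.2 - z| := by gcongr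
      linarith [abs_le.1 (hM p), abs_le.1 (hM (p.1, z))]
  rw [Real.dist_eq, abs_sub_lt_iff]
  constructor <;> linarith [infConvSnd_le hm hk p]

end InfConvSnd

lemma mem_Icc_of_hasDerivWithinAt_of_abs_le {f f' : ℝ → ℝ} {a b M : ℝ}
    (hf : ∀ t ∈ Icc a b, HasDerivWithinAt f (f' t) (Icc a b) t) (hM : ∀ t ∈ Icc a b, |f' t| ≤ M)
    {t : ℝ} (ht : t ∈ Icc a b) : f t ∈ Icc (f a - M * (b - a)) (f a + M * (b - a)) := by
  have h := (convex_Icc a b).norm_image_sub_le_of_norm_hasDerivWithin_le hf hM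
    (left_mem_Icc.2 (ht.1.trans ht.2)) ht
  rw [Real.norm_eq_abs, Real.norm_eq_abs, abs_of_nonneg (sub_nonneg.2 ht.1)] at h
  have hM₀ : 0 ≤ M := (abs_nonneg _).trans (hM t ht)
  obtain ⟨h₁, h₂⟩ :=
    abs_sub_le_iff.1 (h.trans (mul_le_mul_of_nonneg_left (sub_le_sub_right ht.2 a) hM₀))
  exact ⟨by linarith, by linarith⟩

theorem exists_hasDerivWithinAt_of_lipschitzWith {F : ℝ × ℝ → ℝ} {a b M : ℝ} {K : NNReal}
    (hab : a ≤ b) (hF : Continuous F) (hM : ∀ p, |F p| ≤ M)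
    (hK : ∀ t, LipschitzWith K fun y => F (t, y)) (y₀ : ℝ) :
    ∃ α : ℝ → ℝ, α a = y₀ ∧ ∀ t ∈ Icc a b, HasDerivWithinAt α (F (t, α t)) (Icc a b) t := by
  have hM₀ : 0 ≤ M := (abs_nonneg _).trans (hM 0)
  have hpl : IsPicardLindelof (fun t y => F (t, y)) ⟨a, left_mem_Icc.2 hab⟩ y₀
      ⟨M * (b - a), by nlinarith⟩ 0 ⟨M, hM₀⟩ K :=
    { lipschitzOnWith := fun t _ => (hK t).lipschitzOnWith
      continuousOn := fun y _ => (hF.comp (continuous_id.prodMk continuous_const)).continuousOn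
      norm_le := fun t _ y _ => hM (t, y)
      mul_max_le := by
        show M * max (b - a) (a - a) ≤ M * (b - a) - 0
        rw [sub_self, max_eq_left (sub_nonneg.2 hab), sub_zero] }
  exact hpl.exists_eq_forall_mem_Icc_hasDerivWithinAt₀

theorem integral_eq_sub_of_hasDerivWithinAt_Icc {f f' : ℝ → ℝ} {a b : ℝ} (hab : a ≤ b)
    (hf : ∀ x ∈ Icc a b, HasDerivWithinAt f (f' x) (Icc a b) x) (hf' : ContinuousOn f' (Icc a b)) :
    ∫ x in a..b, f' x = f b - f a :=
  intervalIntegral.integral_eq_sub_of_hasDerivAt_of_le hab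
    (fun x hx => (hf x hx).continuousWithinAt)
    (fun x hx => (hf x (Ioo_subset_Icc_self hx)).hasDerivAt (Icc_mem_nhds hx.1 hx.2))
    (hf'.intervalIntegrable_of_Icc hab)

theorem hasDerivWithinAt_integral_Icc {f : ℝ → ℝ} {a b x : ℝ} (hf : ContinuousOn f (Icc a b))
    (hx : x ∈ Icc a b) :
    HasDerivWithinAt (fun y => ∫ t in a..y, f t) (f x) (Icc a b) x := by
  have : Fact (x ∈ Icc a b) := ⟨hx⟩
  exact intervalIntegral.integral_hasDerivWithinAt_right
    ((hf.mono (uIcc_of_le hx.1 ▸ Icc_subset_Icc le_rfl hx.2)).intervalIntegrable)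
    (hf.stronglyMeasurableAtFilter_nhdsWithin measurableSet_Icc x) (hf x hx)

theorem hasDerivWithinAt_of_tendsto_of_tendstoUniformly {F : ℕ → ℝ × ℝ → ℝ} {g : ℝ × ℝ → ℝ}
    {α : ℕ → ℝ → ℝ} {φ : ℝ → ℝ} {a b M y₀ : ℝ} (hF : ∀ n, Continuous (F n))
    (hFM : ∀ n p, |F n p| ≤ M) (hFg : TendstoUniformly F g atTop) (hα₀ : ∀ n, α n a = y₀)
    (hα : ∀ n, ∀ t ∈ Icc a b, HasDerivWithinAt (α n) (F n (t, α n t)) (Icc a b) t)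
    (hφ : ∀ t ∈ Icc a b, Tendsto (fun n => α n t) atTop (𝓝 (φ t))) :
    ∀ t ∈ Icc a b, HasDerivWithinAt φ (g (t, φ t)) (Icc a b) t := by
  have hg : Continuous g := hFg.continuous (Frequently.of_forall hF)
  have hφlip : ∀ s ∈ Icc a b, ∀ t ∈ Icc a b, dist (φ s) (φ t) ≤ M * dist s t := fun s hs t ht =>
    le_of_tendsto_of_tendsto' ((hφ s hs).dist (hφ t ht)) tendsto_const_nhds fun n =>
      (convex_Icc a b).norm_image_sub_le_of_norm_hasDerivWithin_le (hα n)
        (fun x _ => hFM n _) ht hs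
  have hφc : ContinuousOn φ (Icc a b) :=
    (LipschitzOnWith.of_dist_le' (K := M) hφlip).continuousOn
  have hGc : ∀ n, ContinuousOn (fun t => F n (t, α n t)) (Icc a b) := fun n =>
    (hF n).comp_continuousOn (continuousOn_id.prodMk fun t ht => (hα n t ht).continuousWithinAt)
  have hgc : ContinuousOn (fun t => g (t, φ t)) (Icc a b) :=
    hg.comp_continuousOn (continuousOn_id.prodMk hφc)
  have hint : ∀ x ∈ Icc a b, φ x = y₀ + ∫ t in a..x, g (t, φ t) := by
    intro x hx
    have hsub : Icc a x ⊆ Icc a b := Icc_subset_Icc le_rfl hx.2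
    have hαint : ∀ n, α n x = y₀ + ∫ t in a..x, F n (t, α n t) := fun n => by
      rw [integral_eq_sub_of_hasDerivWithinAt_Icc hx.1
        (fun t ht => (hα n t (hsub ht)).mono hsub) ((hGc n).mono hsub), hα₀]
      ring
    refine tendsto_nhds_unique (hφ x hx) ?_
    simp_rw [hαint]
    refine tendsto_const_nhds.add
      (intervalIntegral.tendsto_integral_filter_of_dominated_convergence (fun _ => M)
        (Eventually.of_forall fun n => ?_) (Eventually.of_forall fun n => ?_)
        intervalIntegrable_const (MeasureTheory.ae_of_all _ fun t ht => ?_))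
    · exact ((hGc n).mono (uIoc_of_le hx.1 ▸ Ioc_subset_Icc_self.trans hsub)).aestronglyMeasurable
        measurableSet_uIoc
    · exact MeasureTheory.ae_of_all _ fun t _ => hFM n _
    · have ht' : t ∈ Icc a b := hsub (Ioc_subset_Icc_self (uIoc_of_le hx.1 ▸ ht))
      exact hFg.tendsto_comp hg.continuousAt (tendsto_const_nhds.prodMk_nhds (hφ t ht'))
  intro x hx
  exact ((hasDerivWithinAt_integral_Icc hgc hx).const_add y₀).congr hint (hint x hx)

theorem exists_hasDerivWithinAt_of_uniformContinuous {g : ℝ × ℝ → ℝ} {a b M : ℝ} (hab : a ≤ b)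
    (hg : UniformContinuous g) (hM : ∀ p, |g p| ≤ M) (y₀ : ℝ) :
    ∃ φ : ℝ → ℝ, φ a = y₀ ∧ ∀ t ∈ Icc a b, HasDerivWithinAt φ (g (t, φ t)) (Icc a b) t := by
  have hm : ∀ p, -M ≤ g p := fun p => (abs_le.1 (hM p)).1
  set F : ℕ → ℝ × ℝ → ℝ := fun n => infConvSnd g (n + 1)
  have hk : ∀ n : ℕ, (0 : ℝ) ≤ n + 1 := fun n => by positivity
  have hFM : ∀ n p, |F n p| ≤ M := fun n p =>
    abs_le.2 ⟨le_infConvSnd hm (hk n) p, (infConvSnd_le hm (hk n) p).trans (abs_le.1 (hM p)).2⟩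
  have hFg : TendstoUniformly F g atTop := fun u hu =>
    (tendsto_atTop_add_const_right _ 1 tendsto_natCast_atTop_atTop).eventually
      (tendstoUniformly_infConvSnd hg hM u hu)
  choose α hα₀ hα using fun n => exists_hasDerivWithinAt_of_lipschitzWith hab
    (uniformContinuous_infConvSnd hg hm (hk n)).continuous (hFM n)
    (lipschitzWith_infConvSnd hm (hk n)) y₀
  -- `F n ≤ F (n + 1)` and `F (n + 1)` is `(n + 2)`-Lipschitz in `y`, so the solutions increase
  have hmono : ∀ t ∈ Icc a b, Monotone fun n => α n t := fun t ht =>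
    monotone_nat_of_le_succ fun n =>
      le_of_hasDerivWithinAt_of_sub_le_mul (L := n + 2) (hα n) (hα (n + 1))
        (by rw [hα₀, hα₀]) (fun x _ hx => by
          have hle := infConvSnd_mono hm (hk n) (k' := ((n + 1 : ℕ) : ℝ) + 1)
            (by push_cast; linarith) (x, α n x)
          have hlip := infConvSnd_le_add hm (hk (n + 1)) (y := α n x) (y' := α (n + 1) x)
            fun z => (add_zero (g (x, z))).ge
          rw [abs_of_pos (sub_pos.2 hx)] at hlip
          push_cast at hle hlip ⊢
          linarith) t ht
  have hbdd : ∀ t ∈ Icc a b, BddAbove (range fun n => α n t) := fun t ht =>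
    ⟨y₀ + M * (b - a), forall_mem_range.2 fun n =>
      hα₀ n ▸ (mem_Icc_of_hasDerivWithinAt_of_abs_le (hα n) (fun x _ => hFM n _) ht).2⟩
  refine ⟨fun t => ⨆ n, α n t, by simp [hα₀], ?_⟩
  exact hasDerivWithinAt_of_tendsto_of_tendstoUniformly
    (fun n => (uniformContinuous_infConvSnd hg hm (hk n)).continuous) hFM hFg hα₀ hα
    fun t ht => tendsto_atTop_ciSup (hmono t ht) (hbdd t ht)

/-- Peano's existence theorem. -/
theorem exists_hasDerivWithinAt_of_continuous {g : ℝ × ℝ → ℝ} {a b M : ℝ} (hab : a ≤ b)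
    (hg : Continuous g) (hM : ∀ p, |g p| ≤ M) (y₀ : ℝ) :
    ∃ φ : ℝ → ℝ, φ a = y₀ ∧ ∀ t ∈ Icc a b, HasDerivWithinAt φ (g (t, φ t)) (Icc a b) t := by
  have hr : y₀ - M * (b - a) ≤ y₀ + M * (b - a) := by
    nlinarith [sub_nonneg.2 hab, (abs_nonneg _).trans (hM 0)]
  -- a solution has slope at most `M`, so it never leaves the rectangle `R` onto which we retract
  set R : ℝ × ℝ → ℝ × ℝ := fun p =>
    (projIcc a b hab p.1, projIcc (y₀ - M * (b - a)) (y₀ + M * (b - a)) hr p.2)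
  have hRc : UniformContinuous R :=
    (uniformContinuous_subtype_val.comp ((LipschitzWith.projIcc hab).uniformContinuous.comp
      uniformContinuous_fst)).prodMk
    (uniformContinuous_subtype_val.comp ((LipschitzWith.projIcc hr).uniformContinuous.comp
      uniformContinuous_snd))
  have hgR : UniformContinuous (g ∘ R) := uniformContinuousOn_univ.1 <|
    ((isCompact_Icc.prod isCompact_Icc).uniformContinuousOn_of_continuous hg.continuousOn).comp
      hRc.uniformContinuousOn fun p _ =>
        show R p ∈ Icc a b ×ˢ Icc _ _ from ⟨(projIcc a b hab p.1).2, (projIcc _ _ hr p.2).2⟩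
  obtain ⟨φ, hφ₀, hφ⟩ := exists_hasDerivWithinAt_of_uniformContinuous hab hgR (fun p => hM (R p)) y₀
  have hRφ : ∀ t ∈ Icc a b, R (t, φ t) = (t, φ t) := fun t ht => by
    have hφt := hφ₀ ▸ mem_Icc_of_hasDerivWithinAt_of_abs_le hφ (fun x _ => hM _) ht
    simp only [R, projIcc_of_mem hab ht, projIcc_of_mem hr hφt]
  exact ⟨φ, hφ₀, fun t ht => by simpa only [Function.comp_apply, hRφ t ht] using hφ t ht⟩

def closedRegionBetween (l u : ℝ → ℝ) (s : Set ℝ) : Set (ℝ × ℝ) :=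
  {p | p.1 ∈ s ∧ p.2 ∈ Icc (l p.1) (u p.1)}

noncomputable def projClosedRegionBetween {a b : ℝ} (hab : a ≤ b) (l u : ℝ → ℝ) (p : ℝ × ℝ) :
    ℝ × ℝ :=
  (projIcc a b hab p.1, max (l (projIcc a b hab p.1)) (min p.2 (u (projIcc a b hab p.1))))

section ProjClosedRegionBetween

variable {a b : ℝ} (hab : a ≤ b) {l u : ℝ → ℝ}

lemma projClosedRegionBetween_mem (hlu : ∀ x ∈ Icc a b, l x ≤ u x) (p : ℝ × ℝ) :
    projClosedRegionBetween hab l u p ∈ closedRegionBetween l u (Icc a b) :=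
  ⟨(projIcc a b hab p.1).2, le_max_left _ _,
    max_le (hlu _ (projIcc a b hab p.1).2) (min_le_right _ _)⟩

lemma projClosedRegionBetween_of_mem {p : ℝ × ℝ} (hp : p ∈ closedRegionBetween l u (Icc a b)) :
    projClosedRegionBetween hab l u p = p := by
  obtain ⟨hx, hl, hu⟩ := hp
  simp only [projClosedRegionBetween, projIcc_of_mem hab hx, min_eq_left hu, max_eq_right hl]

lemma projClosedRegionBetween_of_lt {x y : ℝ} (hx : x ∈ Icc a b) (hy : y < l x) :
    projClosedRegionBetween hab l u (x, y) = (x, l x) := by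
  simp only [projClosedRegionBetween, projIcc_of_mem hab hx,
    max_eq_left ((min_le_left _ _).trans hy.le)]

lemma projClosedRegionBetween_of_gt {x y : ℝ} (hx : x ∈ Icc a b) (hlu : l x ≤ u x)
    (hy : u x < y) : projClosedRegionBetween hab l u (x, y) = (x, u x) := by
  simp only [projClosedRegionBetween, projIcc_of_mem hab hx, min_eq_right hy.le, max_eq_right hlu]

lemma continuous_projClosedRegionBetween (hl : ContinuousOn l (Icc a b))
    (hu : ContinuousOn u (Icc a b)) : Continuous (projClosedRegionBetween hab l u) := by
  have hq : Continuous fun p : ℝ × ℝ => (projIcc a b hab p.1 : ℝ) :=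
    continuous_subtype_val.comp (continuous_projIcc.comp continuous_fst)
  exact hq.prodMk ((hl.comp_continuous hq fun p => (projIcc a b hab p.1).2).max
    (continuous_snd.min (hu.comp_continuous hq fun p => (projIcc a b hab p.1).2)))

end ProjClosedRegionBetween

theorem exists_hasDerivWithinAt_mem_closedRegionBetween {f : ℝ × ℝ → ℝ} {l u l' u' : ℝ → ℝ}
    {a b M y₀ : ℝ} (hab : a ≤ b) (hl : ∀ x ∈ Icc a b, HasDerivWithinAt l (l' x) (Icc a b) x)
    (hu : ∀ x ∈ Icc a b, HasDerivWithinAt u (u' x) (Icc a b) x) (hlu : ∀ x ∈ Icc a b, l x ≤ u x)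
    (hf : ContinuousOn f (closedRegionBetween l u (Icc a b)))
    (hM : ∀ p ∈ closedRegionBetween l u (Icc a b), |f p| ≤ M)
    (hlf : ∀ x ∈ Ioo a b, l' x ≤ f (x, l x)) (hfu : ∀ x ∈ Ioo a b, f (x, u x) ≤ u' x)
    (hy₀ : y₀ ∈ Icc (l a) (u a)) :
    ∃ φ : ℝ → ℝ, φ a = y₀ ∧ ∀ x ∈ Icc a b,
      (x, φ x) ∈ closedRegionBetween l u (Icc a b) ∧
        HasDerivWithinAt φ (f (x, φ x)) (Icc a b) x := by
  have hPmem := projClosedRegionBetween_mem hab hlu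
  have hP := continuous_projClosedRegionBetween hab
    (fun x hx => (hl x hx).continuousWithinAt) (fun x hx => (hu x hx).continuousWithinAt)
  obtain ⟨φ, hφ₀, hφ⟩ := exists_hasDerivWithinAt_of_continuous hab (hf.comp_continuous hP hPmem)
    (fun p => hM _ (hPmem p)) y₀
  -- below `l` the retracted field is `f (x, l x) ≥ l' x`, so `φ` cannot cross `l`
  have hlφ : ∀ x ∈ Icc a b, l x ≤ φ x :=
    le_of_hasDerivWithinAt_of_sub_le_mul (L := 0) hl hφ (hφ₀ ▸ hy₀.1) fun x hx hlt => by
      rw [Function.comp_apply, projClosedRegionBetween_of_lt hab (Ioo_subset_Icc_self hx) hlt,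
        zero_mul]
      linarith [hlf x hx]
  have hφu : ∀ x ∈ Icc a b, φ x ≤ u x :=
    le_of_hasDerivWithinAt_of_sub_le_mul (L := 0) hφ hu (hφ₀ ▸ hy₀.2) fun x hx hlt => by
      rw [Function.comp_apply, projClosedRegionBetween_of_gt hab (Ioo_subset_Icc_self hx)
        (hlu x (Ioo_subset_Icc_self hx)) hlt, zero_mul]
      linarith [hfu x hx]
  have hmem : ∀ x ∈ Icc a b, (x, φ x) ∈ closedRegionBetween l u (Icc a b) :=
    fun x hx => ⟨hx, hlφ x hx, hφu x hx⟩
  refine ⟨φ, hφ₀, fun x hx => ⟨hmem x hx, ?_⟩⟩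
  simpa only [Function.comp_apply, projClosedRegionBetween_of_mem hab (hmem x hx)] using hφ x hx

lemma eventually_nhdsGE_le_of_hasDerivWithinAt_pos {f : ℝ → ℝ} {f' x : ℝ}
    (hf : HasDerivWithinAt f f' (Ici x) x) (hf' : 0 < f') : ∀ᶠ y in 𝓝[≥] x, f x ≤ f y := by
  have hslope := (hasDerivWithinAt_iff_tendsto_slope' (lt_irrefl x)).1
    (hasDerivWithinAt_Ioi_iff_Ici.2 hf)
  rw [← Ioi_insert, nhdsWithin_insert, eventually_sup]
  refine ⟨le_refl (f x), ?_⟩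
  filter_upwards [hslope.eventually (eventually_gt_nhds hf'), self_mem_nhdsWithin] with y hy hxy
  rw [slope_def_field] at hy
  have := (div_pos_iff_of_pos_right (sub_pos.2 hxy)).1 hy
  linarith

lemma closedRegionBetween_subset_union {G Ghat : Set (ℝ × ℝ)} {l u : ℝ → ℝ} {h : ℝ}
    (hO : ((0 : ℝ), (0 : ℝ)) ∈ Ghat) (hl₀ : l 0 = 0) (hu₀ : u 0 = 0)
    (hlG : ∀ x ∈ Ioc 0 h, (x, l x) ∈ Ghat) (huG : ∀ x ∈ Ioc 0 h, (x, u x) ∈ Ghat)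
    (hin : ∀ x ∈ Ioc 0 h, ∀ y ∈ Ioo (l x) (u x), (x, y) ∈ G) :
    closedRegionBetween l u (Icc 0 h) ⊆ G ∪ Ghat := by
  rintro ⟨x, y⟩ ⟨hx, hly, hyu⟩
  dsimp only at hx hly hyu
  rcases hx.1.eq_or_lt with rfl | hx₀
  · obtain rfl : y = 0 := le_antisymm (hu₀ ▸ hyu) (hl₀ ▸ hly)
    exact Or.inr hO
  rcases hly.eq_or_lt with rfl | hly
  · exact Or.inr (hlG x ⟨hx₀, hx.2⟩)
  rcases hyu.eq_or_lt with rfl | hyu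
  · exact Or.inr (huG x ⟨hx₀, hx.2⟩)
  exact Or.inl (hin x ⟨hx₀, hx.2⟩ y ⟨hly, hyu⟩)

lemma exists_closedRegionBetween_subset_ball {l u : ℝ → ℝ} {l' u' c δ : ℝ} (hc : 0 < c)
    (hδ : 0 < δ) (hl : HasDerivWithinAt l l' (Ici 0) 0) (hu : HasDerivWithinAt u u' (Ici 0) 0)
    (hl₀ : l 0 = 0) (hu₀ : u 0 = 0) (hlu : l' < u') :
    ∃ h ∈ Ioc 0 c, (∀ x ∈ Icc 0 h, l x ≤ u x) ∧
      closedRegionBetween l u (Icc 0 h) ⊆ Metric.ball 0 δ := by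
  have hlt : Tendsto l (𝓝[≥] 0) (𝓝 0) := by simpa only [hl₀] using hl.continuousWithinAt.tendsto
  have hut : Tendsto u (𝓝[≥] 0) (𝓝 0) := by simpa only [hu₀] using hu.continuousWithinAt.tendsto
  have hball : Ioo (-δ) δ ∈ 𝓝 (0 : ℝ) := Ioo_mem_nhds (neg_lt_zero.2 hδ) hδ
  have hev : ∀ᶠ x in 𝓝[≥] (0 : ℝ),
      x < min c δ ∧ l x ∈ Ioo (-δ) δ ∧ u x ∈ Ioo (-δ) δ ∧ l x ≤ u x :=
    (eventually_nhdsWithin_of_eventually_nhds (eventually_lt_nhds (lt_min hc hδ))).and <|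
      (hlt.eventually_mem hball).and <| (hut.eventually_mem hball).and <| by
        simpa [hl₀, hu₀] using eventually_nhdsGE_le_of_hasDerivWithinAt_pos (hu.sub hl)
          (sub_pos.2 hlu)
  obtain ⟨h, hh, hsub⟩ := mem_nhdsGE_iff_exists_Icc_subset.1 hev
  refine ⟨h, ⟨hh, ((hsub ⟨hh.le, le_rfl⟩).1.trans_le (min_le_left _ _)).le⟩,
    fun x hx => (hsub hx).2.2.2, ?_⟩
  rintro ⟨x, y⟩ ⟨hx, hly, hyu⟩
  obtain ⟨hxδ, ⟨hl₁, -⟩, ⟨-, hu₂⟩, -⟩ := hsub hx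
  have hx₀ : 0 ≤ x := hx.1
  rw [Metric.mem_ball, Prod.dist_eq, max_lt_iff]
  simp only [Prod.fst_zero, Prod.snd_zero, Real.dist_eq, sub_zero, abs_lt]
  dsimp only at hly hyu
  exact ⟨⟨by linarith, hxδ.trans_le (min_le_right _ _)⟩, by linarith, by linarith⟩

theorem theorem1_case_B1_gt_eq_general
    (G Ghat : Set (ℝ × ℝ))
    (f₀ : ℝ × ℝ → ℝ) (hf : ContinuousOn f₀ (G ∪ Ghat))
    (hO : ((0 : ℝ), (0 : ℝ)) ∈ Ghat) (hf0 : f₀ (0, 0) = 0)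
    (a τ : ℝ) (hτ : 0 < τ)
    (bu bu' bl bl' : ℝ → ℝ)
    (hderivu : ∀ x ∈ Icc (0 : ℝ) a, HasDerivWithinAt bu (bu' x) (Icc (0 : ℝ) a) x)
    (hderivl : ∀ x ∈ Icc (0 : ℝ) a, HasDerivWithinAt bl (bl' x) (Icc (0 : ℝ) a) x)
    (hbu0 : bu 0 = 0) (hbl0 : bl 0 = 0)
    (hbu'τ : ∀ x ∈ Icc (0 : ℝ) a, τ ≤ bu' x)
    (hbl'0 : bl' 0 = 0)
    (hcurveu : ∀ x ∈ Ioc (0 : ℝ) a, (x, bu x) ∈ Ghat)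
    (hcurvel : ∀ x ∈ Ioc (0 : ℝ) a, (x, bl x) ∈ Ghat)
    (hbcl : ∀ x ∈ Ioc (0 : ℝ) a, bl' x ≤ f₀ (x, bl x))
    (c : ℝ) (hc : c ∈ Ioc (0 : ℝ) a)
    (hin : ∀ x y : ℝ, 0 < x → x ≤ c → bl x < y → y < bu x → (x, y) ∈ G) :
    ∃ h ∈ Ioc (0 : ℝ) c, ∃ φ : ℝ → ℝ, φ 0 = 0 ∧
      ∀ x ∈ Icc (0 : ℝ) h, (x, φ x) ∈ G ∪ Ghat ∧
        HasDerivWithinAt φ (f₀ (x, φ x)) (Icc (0 : ℝ) h) x := by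
  obtain ⟨hc₀, hca⟩ := hc
  have ha₀ : (0 : ℝ) ∈ Icc 0 a := left_mem_Icc.2 (hc₀.le.trans hca)
  have hnhds : Icc 0 a ∈ 𝓝[≥] (0 : ℝ) := Icc_mem_nhdsGE (hc₀.trans_le hca)
  obtain ⟨δ, hδ, hfδ⟩ := Metric.continuousWithinAt_iff.1 (hf _ (Or.inr hO)) τ hτ
  obtain ⟨h, ⟨hh, hhc⟩, hlu, hball⟩ := exists_closedRegionBetween_subset_ball hc₀ hδ
    ((hderivl 0 ha₀).mono_of_mem_nhdsWithin hnhds) ((hderivu 0 ha₀).mono_of_mem_nhdsWithin hnhds)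
    hbl0 hbu0 (by rw [hbl'0]; exact hτ.trans_le (hbu'τ 0 ha₀))
  have hha : h ≤ a := hhc.trans hca
  have hsub : Icc 0 h ⊆ Icc 0 a := Icc_subset_Icc le_rfl hha
  have hS := closedRegionBetween_subset_union hO hbl0 hbu0
    (fun x hx => hcurvel x ⟨hx.1, hx.2.trans hha⟩) (fun x hx => hcurveu x ⟨hx.1, hx.2.trans hha⟩)
    fun x hx y hy => hin x y hx.1 (hx.2.trans hhc) hy.1 hy.2
  have hM : ∀ p ∈ closedRegionBetween bl bu (Icc 0 h), |f₀ p| ≤ τ :=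
    fun p hp => by simpa only [hf0, Real.dist_eq, sub_zero] using (hfδ (hS hp) (hball hp)).le
  obtain ⟨φ, hφ₀, hφ⟩ := exists_hasDerivWithinAt_mem_closedRegionBetween hh.le
    (fun x hx => (hderivl x (hsub hx)).mono hsub) (fun x hx => (hderivu x (hsub hx)).mono hsub)
    hlu (hf.mono hS) hM (fun x hx => hbcl x ⟨hx.1, hx.2.le.trans hha⟩)
    (fun x hx => (abs_le.1 (hM _ ⟨Ioo_subset_Icc_self hx, hlu x (Ioo_subset_Icc_self hx),
      le_rfl⟩)).2.trans (hbu'τ x (hsub (Ioo_subset_Icc_self hx))))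
    (by simp [hbl0, hbu0] : (0 : ℝ) ∈ Icc (bl 0) (bu 0))
  exact ⟨h, ⟨hh, hhc⟩, φ, hφ₀, fun x hx => ⟨hS (hφ x hx).1, (hφ x hx).2⟩⟩

/-- Theorem 1, case B⁺₁,>,₌. -/
theorem theorem1_case_B1_gt_eq
    (G Ghat : Set (ℝ × ℝ)) (hGopen : IsOpen G) (hGhat : Ghat ⊆ frontier G)
    (f₀ : ℝ × ℝ → ℝ) (hf : ContinuousOn f₀ (G ∪ Ghat))
    (hO : ((0 : ℝ), (0 : ℝ)) ∈ Ghat) (hf0 : f₀ (0, 0) = 0)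
    (a τ : ℝ) (ha : 0 < a) (hτ : 0 < τ)
    (bu bu' bl bl' : ℝ → ℝ)
    (hderivu : ∀ x ∈ Icc (0 : ℝ) a, HasDerivWithinAt bu (bu' x) (Icc (0 : ℝ) a) x)
    (hbu'cont : ContinuousOn bu' (Icc (0 : ℝ) a))
    (hderivl : ∀ x ∈ Icc (0 : ℝ) a, HasDerivWithinAt bl (bl' x) (Icc (0 : ℝ) a) x)
    (hbl'cont : ContinuousOn bl' (Icc (0 : ℝ) a))
    (hbu0 : bu 0 = 0) (hbl0 : bl 0 = 0)
    (hbu'τ : ∀ x ∈ Icc (0 : ℝ) a, τ ≤ bu' x)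
    (hbl'0 : bl' 0 = 0)
    (hconc : ConcaveOn ℝ (Icc (0 : ℝ) a) bl)
    (hcurveu : ∀ x ∈ Ioc (0 : ℝ) a, (x, bu x) ∈ Ghat)
    (hcurvel : ∀ x ∈ Ioc (0 : ℝ) a, (x, bl x) ∈ Ghat)
    (hbcl : ∀ x ∈ Ioc (0 : ℝ) a, bl' x ≤ f₀ (x, bl x))
    (c : ℝ) (hc : c ∈ Ioc (0 : ℝ) a)
    (hin : ∀ x y : ℝ, 0 < x → x ≤ c → bl x < y → y < bu x → (x, y) ∈ G) :
    ∃ h ∈ Ioc (0 : ℝ) c, ∃ φ : ℝ → ℝ, φ 0 = 0 ∧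
      ∀ x ∈ Icc (0 : ℝ) h, (x, φ x) ∈ G ∪ Ghat ∧
        HasDerivWithinAt φ (f₀ (x, φ x)) (Icc (0 : ℝ) h) x :=
  theorem1_case_B1_gt_eq_general G Ghat f₀ hf hO hf0 a τ hτ bu bu' bl bl' hderivu hderivl hbu0 hbl0
    hbu'τ hbl'0 hcurveu hcurvel hbcl c hc hin
end
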